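/- arXiv:1701.08274 — 8 statements merged into one kernel-verified Lean document; each statement's English description precedes it below -/
import Mathlib

section
/- Let A be an N×s complex matrix and B an N×t complex matrix with A*A = I_s and B*B = I_t. Put U_B = 2·B·B* − I_N and U_A = 2·A·A* − I_N, and U = U_B·U_A. Then for every complex number u with u ≠ 1 and u ≠ −1, det(I_N − u·U) = (1−u)^(N−(s+t)) · (1+u)^(s−t) · det((1+u)²·I_t − 4u·(B*·A)·(A*·B)), where the exponents N−(s+t) and s−t are integers (possibly negative). -/
open Matrix

/-!
`P = A Aᴴ` is an idempotent of rank `s`, so `U_A = 2P - I` is an involution and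
`I - u U = (U_A - u U_B) U_A`. Moreover `U_A - u U_B = M - 2u B Bᴴ`, where `M = (u - 1) I + 2P`
acts as `u + 1` on the range of `P` and as `u - 1` on its kernel. The matrix determinant
lemma turns `det (M - 2u B Bᴴ)` into `det M · det (I_t - 2u Bᴴ M⁻¹ B)`, and `Bᴴ M⁻¹ B` is an
explicit combination of `I_t` and `Bᴴ P B`. The determinants of `M` and `U_A` follow from
`det (I + X Y) = det (I + Y X)`, which moves them to `s × s` scalar matrices.
-/

theorem IsIdempotentElem.two_smul_sub_one_mul_self {R A : Type*} [CommRing R] [Ring A]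
    [Algebra R A] {p : A} (hp : IsIdempotentElem p) :
    ((2 : R) • p - 1) * ((2 : R) • p - 1) = 1 := by
  simp only [sub_mul, mul_sub, smul_mul_assoc, mul_smul_comm, one_mul, mul_one, hp.eq]
  module

theorem IsIdempotentElem.smul_one_add_smul_mul_eq_one {K A : Type*} [Field K] [Ring A]
    [Algebra K A] {p : A} (hp : IsIdempotentElem p) {b : K} (c : K) (hb : b ≠ 0)
    (hbc : b + c ≠ 0) :
    (b • 1 + c • p) * (b⁻¹ • 1 - (c / (b * (b + c))) • p) = 1 := by
  simp only [add_mul, mul_sub, smul_mul_assoc, mul_smul_comm, one_mul, mul_one, hp.eq]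
  match_scalars <;> field_simp
  ring

theorem one_sub_smul_mul_eq_sub_smul_mul {R A : Type*} [CommRing R] [Ring A] [Algebra R A]
    {v : A} (hv : v * v = 1) (u : R) (w : A) : 1 - u • (w * v) = (v - u • w) * v := by
  rw [sub_mul, smul_mul_assoc, hv]

namespace Matrix

variable {m n k K : Type*} [Fintype m] [Fintype n] [Fintype k] [DecidableEq n]

theorem isIdempotentElem_mul_of_mul_eq_one {R : Type*} [Semiring R] {A : Matrix m n R}
    {A' : Matrix n m R} (h : A' * A = 1) : IsIdempotentElem (A * A') := by
  rw [IsIdempotentElem, Matrix.mul_assoc, ← Matrix.mul_assoc A', h, Matrix.one_mul]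

variable [DecidableEq m] [DecidableEq k] [Field K]

theorem det_smul_one_add_smul_mul_of_mul_eq_one {A : Matrix m n K} {A' : Matrix n m K}
    (h : A' * A = 1) {b : K} (c : K) (hb : b ≠ 0) :
    det (b • (1 : Matrix m m K) + c • (A * A'))
      = b ^ ((Fintype.card m : ℤ) - Fintype.card n) * (b + c) ^ Fintype.card n := by
  have hfactor : b • (1 : Matrix m m K) + c • (A * A') = b • (1 + A * ((c / b) • A')) := by
    rw [smul_add, Matrix.mul_smul, smul_smul, mul_div_cancel₀ c hb]
  have hsmall : (1 : Matrix n n K) + (c / b) • A' * A = ((b + c) / b) • 1 := by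
    rw [Matrix.smul_mul, h, add_div, div_self hb, add_smul, one_smul]
  rw [hfactor, det_smul, det_one_add_mul_comm, hsmall, det_smul, det_one, zpow_sub₀ hb,
    zpow_natCast, zpow_natCast, div_pow]
  ring

theorem det_two_smul_mul_sub_one_of_mul_eq_one {A : Matrix m n K} {A' : Matrix n m K}
    (h : A' * A = 1) :
    det ((2 : K) • (A * A') - 1) = (-1) ^ ((Fintype.card m : ℤ) - Fintype.card n) := by
  have hdet := det_smul_one_add_smul_mul_of_mul_eq_one h (b := -1) 2 (by norm_num)
  rw [neg_smul, one_smul, neg_add_eq_sub] at hdet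
  norm_num at hdet
  exact hdet

theorem det_two_smul_mul_sub_one_sub_smul_of_mul_eq_one {A : Matrix m n K} {A' : Matrix n m K}
    {B : Matrix m k K} {B' : Matrix k m K} (hA : A' * A = 1) (hB : B' * B = 1) {u : K}
    (hu1 : u ≠ 1) (hu2 : u ≠ -1) :
    det ((2 : K) • (A * A') - 1 - u • ((2 : K) • (B * B') - 1))
      = (u - 1) ^ ((Fintype.card m : ℤ) - Fintype.card n) * (1 + u) ^ Fintype.card n *
        ((1 - u) * (1 + u))⁻¹ ^ Fintype.card k *
        det ((1 + u) ^ 2 • (1 : Matrix k k K) - (4 * u) • (B' * A * (A' * B))) := by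
  have hu : u - 1 ≠ 0 := sub_ne_zero.mpr hu1
  have hu' : 1 + u ≠ 0 := fun h => hu2 (by linear_combination h)
  set M := (u - 1) • (1 : Matrix m m K) + (2 : K) • (A * A')
  have hM := (isIdempotentElem_mul_of_mul_eq_one hA).smul_one_add_smul_mul_eq_one 2 hu
    (fun h => hu' (by linear_combination h))
  rw [show u - 1 + 2 = 1 + u by ring] at hM
  have hsplit : (2 : K) • (A * A') - 1 - u • ((2 : K) • (B * B') - 1)
      = M + B * ((-2 * u) • B') := by
    rw [Matrix.mul_smul]
    module
  have hschur : 1 + ((-2 * u) • B') * M⁻¹ * B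
      = ((1 - u) * (1 + u))⁻¹ • ((1 + u) ^ 2 • (1 : Matrix k k K) -
          (4 * u) • (B' * A * (A' * B))) := by
    rw [inv_eq_right_inv hM]
    simp only [Matrix.smul_mul, Matrix.mul_sub, Matrix.sub_mul, Matrix.mul_smul, Matrix.mul_one,
      hB, ← Matrix.mul_assoc]
    match_scalars <;> field_simp <;> ring
  rw [hsplit, det_add_mul _ _ (isUnit_det_of_right_inverse hM), hschur, det_smul,
    det_smul_one_add_smul_mul_of_mul_eq_one hA 2 hu, show u - 1 + 2 = 1 + u by ring]
  ring

end Matrix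

/-- Key lemma (Theorem 3.1, first equality): for isometries `A` (N×s) and `B` (N×t),
with `U = (2 B Bᴴ - I)(2 A Aᴴ - I)`, the determinant `det(I - u U)` factors as
`(1-u)^(N-(s+t)) (1+u)^(s-t) det((1+u)² I_t - 4u Bᴴ A Aᴴ B)`. -/
theorem staggered_key_lemma_first
    (N s t : ℕ) (A : Matrix (Fin N) (Fin s) ℂ) (B : Matrix (Fin N) (Fin t) ℂ)
    (hA : Aᴴ * A = 1) (hB : Bᴴ * B = 1) (u : ℂ) (hu1 : u ≠ 1) (hu2 : u ≠ -1) :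
    det ((1 : Matrix (Fin N) (Fin N) ℂ) -
        u • (((2 : ℂ) • (B * Bᴴ) - 1) * ((2 : ℂ) • (A * Aᴴ) - 1)))
      = (1 - u) ^ ((N : ℤ) - ((s : ℤ) + (t : ℤ))) * (1 + u) ^ ((s : ℤ) - (t : ℤ)) *
        det ((1 + u) ^ 2 • (1 : Matrix (Fin t) (Fin t) ℂ) -
          (4 * u) • (Bᴴ * A * (Aᴴ * B))) := by
  have hu : 1 - u ≠ 0 := sub_ne_zero.mpr hu1.symm
  have hu' : 1 + u ≠ 0 := fun h => hu2 (by linear_combination h)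
  have hsign : (u - 1) ^ ((N : ℤ) - s) * (-1) ^ ((N : ℤ) - s) = (1 - u) ^ ((N : ℤ) - s) := by
    rw [← mul_zpow, mul_neg_one, neg_sub]
  have hUA := (isIdempotentElem_mul_of_mul_eq_one hA).two_smul_sub_one_mul_self (R := ℂ)
  rw [one_sub_smul_mul_eq_sub_smul_mul hUA, det_mul,
    det_two_smul_mul_sub_one_sub_smul_of_mul_eq_one hA hB hu1 hu2,
    det_two_smul_mul_sub_one_of_mul_eq_one hA]
  simp only [Fintype.card_fin]
  rw [sub_add_eq_sub_sub, zpow_sub₀ hu, zpow_sub₀ hu', ← hsign, mul_inv, mul_pow]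
  simp only [zpow_natCast, inv_pow]
  ring
end

section
/- Let A be an N×s complex matrix and B an N×t complex matrix with A*A = I_s and B*B = I_t. Put U = (2·B·B* − I_N)·(2·A·A* − I_N). Then for every complex number λ with λ ≠ 1 and λ ≠ −1, det(λ·I_N − U) = (λ−1)^(N−s−t) · (λ+1)^(s−t) · det((λ+1)²·I_t − 4λ·(B*·A)·(A*·B)), where the exponents N−s−t and s−t are integers (possibly negative). -/
open Matrix

/-!
Since `U_A` is an involution, `λ - U_B U_A = (U_B - λ U_A)(-U_A)`, and `det (-U_A) = (-1)^s`.
The matrix `U_B - λ U_A` is `(λ - 1)` times the identity minus a perturbation of rank `s + t`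
factoring through `[A B]`. Sylvester's determinant identity moves the perturbation to the
`(s + t) × (s + t)` block matrix `[[-(λ+1), -2λ Aᴴ B], [2 Bᴴ A, λ+1]]`, whose Schur complement
with respect to the first block is `((λ+1)² - 4λ Bᴴ A Aᴴ B) / (λ+1)`.
-/

namespace Matrix

variable {m n k R : Type*} [CommRing R]

open Fintype in
theorem det_smul_one_sub_mul_comm [Fintype m] [Fintype n] [DecidableEq m] [DecidableEq n]
    (c : R) (X : Matrix m n R) (Y : Matrix n m R) :
    c ^ card n * det (c • 1 - X * Y) = c ^ card m * det (c • 1 - Y * X) := by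
  simpa [eval_charpoly, smul_one_eq_diagonal] using
    congr_arg (Polynomial.eval c) (charpoly_mul_comm' X Y)

open Fintype in
theorem det_fromBlocks_smul_one₁₁ [Fintype m] [Fintype n] [DecidableEq m] [DecidableEq n]
    (a : R) (B : Matrix m n R) (C : Matrix n m R) (D : Matrix n n R) :
    a ^ card n * det (fromBlocks (a • 1) B C D) = a ^ card m * det (a • D - C * B) := by
  have h : fromBlocks (a • 1) B C D * fromBlocks 1 (-B) 0 (a • 1) =
      fromBlocks (a • 1) 0 C (a • D - C * B) := by
    simp [fromBlocks_multiply, sub_eq_neg_add]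
  simpa [det_mul, det_fromBlocks_zero₂₁, det_fromBlocks_zero₁₂, mul_comm] using congr_arg det h

theorem det_smul_one_sub_mul_of_mul_self_eq_one [Fintype m] [DecidableEq m]
    {V : Matrix m m R} (hV : V * V = 1) (W : Matrix m m R) (c : R) :
    det (c • 1 - W * V) = det (W - c • V) * det (-V) := by
  rw [← det_mul, Matrix.mul_neg, Matrix.sub_mul, Matrix.smul_mul, hV, neg_sub]

theorem two_smul_mul_sub_one_mul_self [Fintype m] [Fintype n] [DecidableEq m] [DecidableEq n]
    {A : Matrix m n R} {C : Matrix n m R} (h : C * A = 1) :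
    ((2 : R) • (A * C) - 1) * ((2 : R) • (A * C) - 1) = 1 := by
  have hidem : A * C * (A * C) = A * C := by
    rw [Matrix.mul_assoc, ← Matrix.mul_assoc C, h, Matrix.one_mul]
  simp only [Matrix.sub_mul, Matrix.mul_sub, Matrix.smul_mul, Matrix.mul_smul,
    Matrix.one_mul, Matrix.mul_one, hidem]
  module

theorem det_one_sub_two_smul_mul [Fintype m] [Fintype n] [DecidableEq m] [DecidableEq n]
    {A : Matrix m n R} {C : Matrix n m R} (h : C * A = 1) :
    det (1 - (2 : R) • (A * C)) = (-1) ^ Fintype.card n := by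
  rw [← Matrix.mul_smul, det_one_sub_mul_comm, Matrix.smul_mul, h,
    show (1 : Matrix n n R) - (2 : R) • 1 = -1 by module, det_neg, det_one, mul_one]

theorem two_smul_mul_sub_one_sub_smul [Fintype n] [Fintype k] [DecidableEq m]
    (A : Matrix m n R) (C : Matrix n m R) (B : Matrix m k R) (D : Matrix k m R) (c : R) :
    (2 : R) • (B * D) - 1 - c • ((2 : R) • (A * C) - 1) =
      (c - 1) • 1 - fromCols A B * fromRows ((2 * c) • C) ((-2 : R) • D) := by
  rw [fromCols_mul_fromRows, Matrix.mul_smul, Matrix.mul_smul]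
  module

theorem det_smul_one_sub_fromRows_mul_fromCols [Fintype m] [Fintype n] [Fintype k]
    [DecidableEq n] [DecidableEq k] {A : Matrix m n R} {C : Matrix n m R}
    {B : Matrix m k R} {D : Matrix k m R} (hCA : C * A = 1) (hDB : D * B = 1) (c : R) :
    (c + 1) ^ Fintype.card k *
        det ((c - 1) • 1 - fromRows ((2 * c) • C) ((-2 : R) • D) * fromCols A B) =
      (-(c + 1)) ^ Fintype.card n * det ((c + 1) ^ 2 • 1 - (4 * c) • (D * A * (C * B))) := by
  have hblocks : (c - 1) • 1 - fromRows ((2 * c) • C) ((-2 : R) • D) * fromCols A B =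
      fromBlocks (-(c + 1) • 1) (-(2 * c) • (C * B)) ((2 : R) • (D * A)) ((c + 1) • 1) := by
    rw [fromRows_mul_fromCols, ← fromBlocks_one, fromBlocks_smul, sub_eq_add_neg,
      fromBlocks_neg, fromBlocks_add]
    simp only [Matrix.smul_mul, hCA, hDB]
    congr 1 <;> module
  have hschur : -(c + 1) • (c + 1) • (1 : Matrix k k R) -
      (2 : R) • (D * A) * (-(2 * c) • (C * B)) =
      -((c + 1) ^ 2 • 1 - (4 * c) • (D * A * (C * B))) := by
    simp only [Matrix.smul_mul, Matrix.mul_smul]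
    module
  have h := det_fromBlocks_smul_one₁₁ (-(c + 1)) (-(2 * c) • (C * B)) ((2 : R) • (D * A))
    ((c + 1) • (1 : Matrix k k R))
  rw [hschur, det_neg, neg_pow (c + 1) (Fintype.card k)] at h
  rw [hblocks]
  refine (isUnit_neg_one.pow (Fintype.card k)).mul_left_cancel ?_
  rw [← mul_assoc, h, mul_left_comm]

end Matrix

/-- Corollary 3.4: characteristic-polynomial form of the key lemma. For isometries
`A` (N×s), `B` (N×t) and `U = (2 B Bᴴ - I)(2 A Aᴴ - I)`,
`det(λ I - U) = (λ-1)^(N-s-t) (λ+1)^(s-t) det((λ+1)² I_t - 4λ Bᴴ A Aᴴ B)`. -/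
theorem staggered_char_poly
    (N s t : ℕ) (A : Matrix (Fin N) (Fin s) ℂ) (B : Matrix (Fin N) (Fin t) ℂ)
    (hA : Aᴴ * A = 1) (hB : Bᴴ * B = 1) (lam : ℂ) (h1 : lam ≠ 1) (h2 : lam ≠ -1) :
    det (lam • (1 : Matrix (Fin N) (Fin N) ℂ) -
        ((2 : ℂ) • (B * Bᴴ) - 1) * ((2 : ℂ) • (A * Aᴴ) - 1))
      = (lam - 1) ^ ((N : ℤ) - (s : ℤ) - (t : ℤ)) * (lam + 1) ^ ((s : ℤ) - (t : ℤ)) *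
        det ((lam + 1) ^ 2 • (1 : Matrix (Fin t) (Fin t) ℂ) -
          (4 * lam) • (Bᴴ * A * (Aᴴ * B))) := by
  have hx : lam - 1 ≠ 0 := sub_ne_zero.mpr h1
  have hy : lam + 1 ≠ 0 := by rwa [← sub_neg_eq_add, sub_ne_zero]
  rw [det_smul_one_sub_mul_of_mul_self_eq_one (two_smul_mul_sub_one_mul_self hA), neg_sub,
    det_one_sub_two_smul_mul hA, two_smul_mul_sub_one_sub_smul]
  have hrank := det_smul_one_sub_mul_comm (lam - 1) (fromCols A B)
    (fromRows ((2 * lam) • Aᴴ) ((-2 : ℂ) • Bᴴ))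
  have hschur := det_smul_one_sub_fromRows_mul_fromCols hA hB lam
  simp only [Fintype.card_sum, Fintype.card_fin] at hrank hschur ⊢
  generalize det ((lam + 1) ^ 2 • (1 : Matrix (Fin t) (Fin t) ℂ) -
    (4 * lam) • (Bᴴ * A * (Aᴴ * B))) = D at hschur ⊢
  generalize det ((lam - 1) • 1 - fromCols A B * fromRows ((2 * lam) • Aᴴ) ((-2 : ℂ) • Bᴴ)) = P
    at hrank ⊢
  generalize det ((lam - 1) • 1 - fromRows ((2 * lam) • Aᴴ) ((-2 : ℂ) • Bᴴ) * fromCols A B) = Q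
    at hrank hschur
  rw [neg_pow] at hschur
  have hsign : ((-1 : ℂ) ^ s) * (-1) ^ s = 1 := by rw [← mul_pow, neg_one_mul, neg_neg, one_pow]
  rw [zpow_sub₀ hx, zpow_sub₀ hx, zpow_sub₀ hy]
  simp only [zpow_natCast]
  field_simp
  linear_combination (-1) ^ s * (lam + 1) ^ t * hrank + (-1) ^ s * (lam - 1) ^ N * hschur +
    (lam - 1) ^ N * (lam + 1) ^ s * D * hsign
end

section
/- Let A be an N×s complex matrix and B an N×t complex matrix with A*A = I_s and B*B = I_t, and put U = (2·B·B* − I_N)·(2·A·A* − I_N). If λ is a complex number with λ ≠ 0, λ ≠ 1, λ ≠ −1 and det(λ·I_N − U) = 0, then (λ+1)²/(4λ) is an eigenvalue of the t×t matrix (B*·A)·(A*·B), i.e., det(((λ+1)²/(4λ))·I_t − (B*·A)·(A*·B)) = 0. -/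
open Matrix

/-- If `λ ∉ {0, 1, -1}` is an eigenvalue of `U = (2 B Bᴴ - I)(2 A Aᴴ - I)` (for
isometries `A`, `B`), then `(λ+1)²/(4λ)` is an eigenvalue of `Bᴴ A Aᴴ B`. -/
theorem staggered_eigenvalue_correspondence
    (N s t : ℕ) (A : Matrix (Fin N) (Fin s) ℂ) (B : Matrix (Fin N) (Fin t) ℂ)
    (hA : Aᴴ * A = 1) (hB : Bᴴ * B = 1) (lam : ℂ)
    (h0 : lam ≠ 0) (h1 : lam ≠ 1) (h2 : lam ≠ -1)
    (hev : det (lam • (1 : Matrix (Fin N) (Fin N) ℂ) -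
        ((2 : ℂ) • (B * Bᴴ) - 1) * ((2 : ℂ) • (A * Aᴴ) - 1)) = 0) :
    det (((lam + 1) ^ 2 / (4 * lam)) • (1 : Matrix (Fin t) (Fin t) ℂ) -
        Bᴴ * A * (Aᴴ * B)) = 0 := by
  classical
  set P : Matrix (Fin N) (Fin N) ℂ := A * Aᴴ with hPdef
  set Q : Matrix (Fin N) (Fin N) ℂ := B * Bᴴ with hQdef
  have hPP : P * P = P := by
    rw [hPdef, Matrix.mul_assoc, ← Matrix.mul_assoc Aᴴ A Aᴴ, hA, Matrix.one_mul]
  have hQQ : Q * Q = Q := by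
    rw [hQdef, Matrix.mul_assoc, ← Matrix.mul_assoc Bᴴ B Bᴴ, hB, Matrix.one_mul]
  obtain ⟨v, hv0, hv⟩ := Matrix.exists_mulVec_eq_zero_iff.mpr hev
  have hU : ((2 : ℂ) • Q - 1) *ᵥ (((2 : ℂ) • P - 1) *ᵥ v) = lam • v := by
    rw [Matrix.sub_mulVec, sub_eq_zero, Matrix.smul_mulVec, Matrix.one_mulVec] at hv
    rw [Matrix.mulVec_mulVec]
    exact hv.symm
  set pv : Fin N → ℂ := P *ᵥ v with hpv
  set qv : Fin N → ℂ := Q *ᵥ v with hqv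
  set qpv : Fin N → ℂ := Q *ᵥ pv with hqpv
  have hQqv : Q *ᵥ qv = qv := by rw [hqv, Matrix.mulVec_mulVec, hQQ]
  have hQqpv : Q *ᵥ qpv = qpv := by rw [hqpv, Matrix.mulVec_mulVec, hQQ]
  have hPpv : P *ᵥ pv = pv := by rw [hpv, Matrix.mulVec_mulVec, hPP]
  -- expanded eigenvalue equation
  have E : (4 : ℂ) • qpv - (2 : ℂ) • qv - (2 : ℂ) • pv + v = lam • v := by
    have h1' : ((2 : ℂ) • P - 1) *ᵥ v = (2 : ℂ) • pv - v := by
      rw [Matrix.sub_mulVec, Matrix.smul_mulVec, Matrix.one_mulVec]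
    rw [h1', Matrix.sub_mulVec, Matrix.smul_mulVec, Matrix.one_mulVec,
      Matrix.mulVec_sub, Matrix.mulVec_smul] at hU
    rw [← hU, ← hqpv]
    module
  -- apply Q to E
  have E2 : (2 : ℂ) • qpv = (lam + 1) • qv := by
    have h := congrArg (fun x => Q *ᵥ x) E
    simp only [Matrix.mulVec_add, Matrix.mulVec_sub, Matrix.mulVec_smul, hQqv, hQqpv] at h
    rw [← hqpv] at h
    funext i
    have h' := congrFun h i
    simp only [Pi.add_apply, Pi.sub_apply, Pi.smul_apply, smul_eq_mul] at h' ⊢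
    linear_combination h'
  -- solve for pv
  have E3 : (2 : ℂ) • pv = (2 * lam) • qv + (1 - lam) • v := by
    funext i
    have h' := congrFun E i
    have h2' := congrFun E2 i
    simp only [Pi.add_apply, Pi.sub_apply, Pi.smul_apply, smul_eq_mul] at h' h2' ⊢
    linear_combination 2 * h2' - h'
  -- qv ≠ 0
  have hqv0 : qv ≠ 0 := by
    intro hz
    rw [hz] at E3
    have hPp : (2 : ℂ) • pv = (1 - lam) • pv := by
      have h := congrArg (fun x => P *ᵥ x) E3
      simpa [Matrix.mulVec_add, Matrix.mulVec_smul, hPpv, hz, ← hpv] using h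
    have key : ((1 - lam) * (-1 - lam)) • v = 0 := by
      funext i
      have h3 := congrFun E3 i
      have h4 := congrFun hPp i
      simp only [Pi.add_apply, Pi.sub_apply, Pi.smul_apply, Pi.zero_apply,
        smul_eq_mul, mul_zero, zero_add] at h3 h4 ⊢
      -- h3 : 2 * pv i = (1 - lam) * v i ; h4 : 2 * pv i = (1 - lam) * pv i
      linear_combination (1 + lam) * h3 - 2 * h4
    rcases smul_eq_zero.mp key with hc | hc
    · rcases mul_eq_zero.mp hc with hc' | hc'
      · exact h1 (by linear_combination -hc')
      · exact h2 (by linear_combination -hc')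
    · exact hv0 hc
  -- the eigenvalue
  set mu : ℂ := (lam + 1) ^ 2 / (4 * lam) with hmu
  have h4lam : (4 : ℂ) * lam ≠ 0 := by
    intro h; exact h0 (by simpa using mul_eq_zero.mp h |>.resolve_left (by norm_num))
  -- Q P qv = mu • qv
  have hQP : Q *ᵥ (P *ᵥ qv) = mu • qv := by
    -- (2 lam) • (P *ᵥ qv) = (1 + lam) • pv
    have hstep1 : (2 * lam) • (P *ᵥ qv) = (1 + lam) • pv := by
      have h := congrArg (fun x => P *ᵥ x) E3
      simp only [Matrix.mulVec_add, Matrix.mulVec_smul, hPpv, ← hpv] at h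
      -- h : 2 • pv = (2*lam) • (P *ᵥ qv) + (1-lam) • pv
      funext i
      have h' := congrFun h i
      simp only [Pi.add_apply, Pi.sub_apply, Pi.smul_apply, smul_eq_mul] at h' ⊢
      linear_combination -h'
    have hstep2 : (2 * lam) • (Q *ᵥ (P *ᵥ qv)) = (1 + lam) • qpv := by
      have h := congrArg (fun x => Q *ᵥ x) hstep1
      simpa [Matrix.mulVec_smul, ← hqpv] using h
    have hstep3 : (4 * lam) • (Q *ᵥ (P *ᵥ qv)) = ((lam + 1) ^ 2) • qv := by
      funext i
      have h' := congrFun hstep2 i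
      have h2' := congrFun E2 i
      simp only [Pi.smul_apply, smul_eq_mul] at h' h2' ⊢
      linear_combination 2 * h' + (1 + lam) * h2'
    have h := congrArg (fun x => ((4 * lam)⁻¹ : ℂ) • x) hstep3
    simp only [smul_smul, inv_mul_cancel₀ h4lam, one_smul] at h
    rw [h, hmu]
    congr 1
    field_simp
  set w : Fin t → ℂ := Bᴴ *ᵥ qv with hw
  have hBw : B *ᵥ w = qv := by
    rw [hw, Matrix.mulVec_mulVec, ← hQdef, hQqv]
  have hw0 : w ≠ 0 := by
    intro h
    apply hqv0
    rw [← hBw, h, Matrix.mulVec_zero]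
  have hMw : (Bᴴ * A * (Aᴴ * B)) *ᵥ w = mu • w := by
    have hBQ : Bᴴ * Q = Bᴴ := by
      rw [hQdef, ← Matrix.mul_assoc, hB, Matrix.one_mul]
    have hmat : (Bᴴ * A * (Aᴴ * B)) * Bᴴ = (Bᴴ * P) * Q := by
      rw [hPdef, hQdef]
      simp only [Matrix.mul_assoc]
    have step1 : (Bᴴ * A * (Aᴴ * B)) *ᵥ w = (Bᴴ * P) *ᵥ qv := by
      rw [hw, Matrix.mulVec_mulVec, hmat, ← Matrix.mulVec_mulVec, hQqv]
    rw [step1]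
    have h2' : Bᴴ *ᵥ (Q *ᵥ (P *ᵥ qv)) = mu • w := by
      rw [hQP, Matrix.mulVec_smul, hw]
    rw [Matrix.mulVec_mulVec, hBQ, Matrix.mulVec_mulVec] at h2'
    exact h2'
  apply Matrix.exists_mulVec_eq_zero_iff.mp
  refine ⟨w, hw0, ?_⟩
  rw [Matrix.sub_mulVec, Matrix.smul_mulVec, Matrix.one_mulVec, hMw, sub_self]
end

section
/- Let A be an N×s complex matrix and B an N×t complex matrix with A*A = I_s and B*B = I_t. If N < s + t, then (X − 1)^(s+t−N) divides the characteristic polynomial det(X·I_t − (B*·A)·(A*·B)) in ℂ[X]; in particular 1 is an eigenvalue of (B*·A)·(A*·B) of algebraic multiplicity at least s + t − N. -/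
/-!
Write `M = (Bᴴ A)(Aᴴ B)`. Since `Bᴴ B = 1`, `M - 1 = Bᴴ (A Aᴴ - 1) B`, and `A Aᴴ - 1` kills the
`s`-dimensional range of `A`, so `rank (M - 1) ≤ N - s`. Hence the eigenspace of `M` for `1` has
dimension at least `t - (N - s)`, and geometric multiplicity bounds algebraic multiplicity.
-/

open Matrix Polynomial

namespace Matrix

variable {m n K : Type*} [Fintype m] [Fintype n] [Field K]

theorem rank_eq_card_of_mul_eq_one [DecidableEq n] {B : Matrix n m K} {A : Matrix m n K}
    (h : B * A = 1) : A.rank = Fintype.card n := by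
  refine le_antisymm A.rank_le_card_width ?_
  simpa [h] using rank_mul_le_right B A

theorem rank_mul_sub_one_add_card_le [DecidableEq m] [DecidableEq n] {B : Matrix n m K}
    {A : Matrix m n K} (h : B * A = 1) :
    (A * B - 1).rank + Fintype.card n ≤ Fintype.card m := by
  have hkill : (A * B - 1) * A = 0 := by
    rw [Matrix.sub_mul, Matrix.mul_assoc, h, Matrix.mul_one, Matrix.one_mul, sub_self]
  simpa [rank_eq_card_of_mul_eq_one h] using rank_add_rank_le_card_of_mul_eq_zero hkill

theorem rank_mul_mul_sub_one_le [DecidableEq m] [DecidableEq n] {D : Matrix n m K}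
    {C : Matrix m n K} (h : D * C = 1) (P : Matrix m m K) :
    (D * P * C - 1).rank ≤ (P - 1).rank := by
  have hcompress : D * P * C - 1 = D * (P - 1) * C := by
    rw [Matrix.mul_sub, Matrix.sub_mul, Matrix.mul_one, h]
  rw [hcompress]
  exact (rank_mul_le_left _ _).trans (rank_mul_le_right _ _)

theorem card_le_rank_sub_add_rootMultiplicity [DecidableEq n] (M : Matrix n n K) (μ : K) :
    Fintype.card n ≤ (M - μ • 1).rank + M.charpoly.rootMultiplicity μ := by
  have hgeom := M.mulVecLin.finrank_eigenspace_le μ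
  have hlin : M.mulVecLin - μ • 1 = (M - μ • 1).mulVecLin := by
    ext; simp
  rw [Module.End.eigenspace_def, charpoly_mulVecLin, hlin] at hgeom
  have hnullity := (M - μ • 1).mulVecLin.finrank_range_add_finrank_ker
  rw [Module.finrank_fintype_fun_eq_card] at hnullity
  change (M - μ • 1).rank + _ = _ at hnullity
  omega

end Matrix

theorem one_eigenvalue_of_TBA_TAB_general
    (N s t : ℕ) (A : Matrix (Fin N) (Fin s) ℂ) (B : Matrix (Fin N) (Fin t) ℂ)
    (hA : Aᴴ * A = 1) (hB : Bᴴ * B = 1) :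
    ((X - 1) ^ (s + t - N) ∣ ((Bᴴ * A) * (Aᴴ * B)).charpoly) ∧
      s + t - N ≤ (((Bᴴ * A) * (Aᴴ * B)).charpoly).rootMultiplicity 1 := by
  have hcompress : ((Bᴴ * A) * (Aᴴ * B) - 1).rank ≤ (A * Aᴴ - 1).rank := by
    simpa only [Matrix.mul_assoc] using rank_mul_mul_sub_one_le hB (A * Aᴴ)
  have hcompl := rank_mul_sub_one_add_card_le hA
  have hgeom := ((Bᴴ * A) * (Aᴴ * B)).card_le_rank_sub_add_rootMultiplicity 1
  rw [one_smul, Fintype.card_fin] at hgeom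
  rw [Fintype.card_fin, Fintype.card_fin] at hcompl
  have hmult : s + t - N ≤ ((Bᴴ * A) * (Aᴴ * B)).charpoly.rootMultiplicity 1 := by omega
  refine ⟨?_, hmult⟩
  simpa using (le_rootMultiplicity_iff (charpoly_monic _).ne_zero).1 hmult

/-- If `N < s + t`, then `(X - 1)^(s + t - N)` divides the characteristic polynomial of
`(Bᴴ A)(Aᴴ B)`; in particular `1` is an eigenvalue of `(Bᴴ A)(Aᴴ B)` of algebraic
multiplicity at least `s + t - N`. -/
theorem one_eigenvalue_of_TBA_TAB
    (N s t : ℕ) (A : Matrix (Fin N) (Fin s) ℂ) (B : Matrix (Fin N) (Fin t) ℂ)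
    (hA : Aᴴ * A = 1) (hB : Bᴴ * B = 1) (hN : N < s + t) :
    ((X - 1) ^ (s + t - N) ∣ ((Bᴴ * A) * (Aᴴ * B)).charpoly) ∧
      s + t - N ≤ (((Bᴴ * A) * (Aᴴ * B)).charpoly).rootMultiplicity 1 :=
  one_eigenvalue_of_TBA_TAB_general N s t A B hA hB
end

section
/- Let X, Y, E be finite sets with |X| = m, |Y| = n, |E| = ν, and let ∂₀ : E → X and ∂₁ : E → Y be maps (so E is the edge set of a bipartite multigraph with partite sets X and Y). Let a, b : E → ℂ satisfy Σ_{e : ∂₀(e)=x} |a(e)|² = 1 for each x ∈ X and Σ_{e : ∂₁(e)=y} |b(e)|² = 1 for each y ∈ Y. Define the ν×m matrix K by K_{e,x} = a(e) if ∂₀(e) = x and 0 otherwise, the ν×n matrix L by L_{e,y} = b(e) if ∂₁(e) = y and 0 otherwise, the unitary matrices U₀ = 2·K·K* − I_ν and U₁ = 2·L·L* − I_ν, U = U₁·U₀, and the m×m matrix Â = K*·L·L*·K. Then for every complex number u with u ≠ 1 and u ≠ −1, det(I_ν − u·U) = (1−u)^(ν−m−n) · (1+u)^(n−m) · det((1+u)²·I_m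 − 4u·Â), with integer (possibly negative) exponents. -/
/-!
Write `P = L Lᴴ` and `Q = K Kᴴ`; the amplitude conditions say `Kᴴ K = 1` and `Lᴴ L = 1`, so `P`
and `Q` are idempotents of ranks `n` and `m`. Expanding, `1 - u U = G + 2u (1 - 2P) Q` with
`G = (1 - u)(1 - P) + (1 + u) P`. As `G` acts by scalars on the two eigenspaces of `P`, its
determinant is `(1 - u)^(ν - n) (1 + u)^n` and its inverse is `(1 - u)⁻¹(1 - P) + (1 + u)⁻¹ P`.
Since `Q = K Kᴴ`, the matrix determinant lemma turns `det (1 + G⁻¹ 2u (1 - 2P) Q)` into an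
`m × m` determinant, which collapses to `((1 - u)(1 + u))^(-m) det ((1 + u)² - 4u Kᴴ P K)`.
-/

open Matrix

theorem conjTranspose_mul_self_eq_one_of_sum_fiber_norm_sq
    {𝕜 α E : Type*} [RCLike 𝕜] [Fintype E] [DecidableEq α]
    (d : E → α) (a : E → 𝕜)
    (ha : ∀ x, ∑ e ∈ Finset.univ.filter (fun e => d e = x), ‖a e‖ ^ 2 = 1) :
    (of fun e x => if d e = x then a e else 0 : Matrix E α 𝕜)ᴴ *
      (of fun e x => if d e = x then a e else 0) = 1 := by
  ext x x'
  simp only [mul_apply, conjTranspose_apply, of_apply, one_apply]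
  split_ifs with hxx'
  · subst hxx'
    have hnorm : ∑ e ∈ Finset.univ.filter (fun e => d e = x), (‖a e‖ : 𝕜) ^ 2 = 1 := by
      exact_mod_cast congrArg (algebraMap ℝ 𝕜) (ha x)
    rw [← hnorm, Finset.sum_filter]
    refine Finset.sum_congr rfl fun e _ => ?_
    split_ifs <;> simp [RCLike.star_def, RCLike.conj_mul]
  · refine Finset.sum_eq_zero fun e _ => ?_
    split_ifs with h h' <;> simp_all

theorem IsIdempotentElem.smul_one_sub_add_smul_mul {R A : Type*} [CommRing R] [Ring A]
    [Algebra R A] {p : A} (hp : IsIdempotentElem p) (a b c d : R) :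
    (a • (1 - p) + b • p) * (c • (1 - p) + d • p) = (a * c) • (1 - p) + (b * d) • p := by
  simp only [add_mul, mul_add, smul_mul_smul_comm, hp.one_sub.eq, hp.eq, hp.mul_one_sub_self,
    hp.one_sub_mul_self, smul_zero, add_zero, zero_add]

theorem one_sub_smul_reflection_mul_reflection {R A : Type*} [CommRing R] [Ring A] [Algebra R A]
    (p q : A) (u : R) :
    1 - u • (((2 : R) • p - 1) * ((2 : R) • q - 1)) =
      (1 - u) • (1 - p) + (1 + u) • p + (2 * u) • ((1 - (2 : R) • p) * q) := by
  simp only [sub_mul, mul_sub, smul_mul_assoc, mul_smul_comm, mul_one, one_mul, smul_sub]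
  module

namespace Matrix

variable {𝕜 E X Y : Type*} [Field 𝕜] [Fintype E] [Fintype X] [Fintype Y]
  [DecidableEq E] [DecidableEq X] [DecidableEq Y]

theorem det_smul_one_sub_add_smul_of_mul_eq_one {L : Matrix E Y 𝕜} {M : Matrix Y E 𝕜}
    (hML : M * L = 1) {α : 𝕜} (hα : α ≠ 0) (β : 𝕜) :
    det (α • (1 - L * M) + β • (L * M)) =
      α ^ ((Fintype.card E : ℤ) - Fintype.card Y) * β ^ Fintype.card Y := by
  have hfactor : α • (1 - L * M) + β • (L * M) = α • (1 + (((β - α) / α) • L) * M) := by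
    rw [Matrix.smul_mul, smul_add, smul_smul, mul_div_cancel₀ _ hα]
    module
  rw [hfactor, det_smul, det_one_add_mul_comm, Matrix.mul_smul, hML,
    show (1 : Matrix Y Y 𝕜) + ((β - α) / α) • 1 = (1 + (β - α) / α) • 1 by rw [add_smul, one_smul],
    det_smul, det_one, mul_one, zpow_sub₀ hα, zpow_natCast, zpow_natCast, one_add_div hα,
    add_sub_cancel, div_pow]
  field_simp

theorem det_smul_one_sub_add_smul_add_smul_mul_of_isIdempotentElem {P : Matrix E E 𝕜}
    (hP : IsIdempotentElem P) {K : Matrix E X 𝕜} {N : Matrix X E 𝕜} (hNK : N * K = 1)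
    {α β : 𝕜} (hα : α ≠ 0) (hβ : β ≠ 0) :
    det (α • (1 - P) + β • P + (β - α) • ((1 - (2 : 𝕜) • P) * (K * N))) =
      det (α • (1 - P) + β • P) *
        ((α * β)⁻¹ ^ Fintype.card X * det (β ^ 2 • 1 - (β ^ 2 - α ^ 2) • (N * P * K))) := by
  have hGinv : (α • (1 - P) + β • P) * (α⁻¹ • (1 - P) + β⁻¹ • P) = 1 := by
    rw [hP.smul_one_sub_add_smul_mul, mul_inv_cancel₀ hα, mul_inv_cancel₀ hβ]
    module
  have hreflect : (α⁻¹ • (1 - P) + β⁻¹ • P) * (1 - (2 : 𝕜) • P) = α⁻¹ • (1 - P) - β⁻¹ • P := by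
    rw [show 1 - (2 : 𝕜) • P = (1 : 𝕜) • (1 - P) + (-1 : 𝕜) • P by module,
      hP.smul_one_sub_add_smul_mul]
    module
  have hcompress : 1 + N * (α⁻¹ • (1 - P) + β⁻¹ • P) * ((β - α) • ((1 - (2 : 𝕜) • P) * K)) =
      (α * β)⁻¹ • (β ^ 2 • 1 - (β ^ 2 - α ^ 2) • (N * P * K)) := by
    rw [Matrix.mul_smul, Matrix.mul_assoc N, ← Matrix.mul_assoc _ _ K, hreflect]
    simp only [Matrix.sub_mul, Matrix.mul_sub, Matrix.smul_mul, Matrix.mul_smul, Matrix.one_mul,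
      hNK, ← Matrix.mul_assoc]
    match_scalars <;> field_simp <;> ring
  rw [← Matrix.mul_assoc, ← Matrix.smul_mul (β - α), det_add_mul _ _
    (isUnit_det_of_right_inverse hGinv), inv_eq_right_inv hGinv, hcompress, det_smul]

theorem det_one_sub_smul_reflection_mul_reflection
    {K : Matrix E X 𝕜} {N : Matrix X E 𝕜} (hNK : N * K = 1)
    {L : Matrix E Y 𝕜} {M : Matrix Y E 𝕜} (hML : M * L = 1) {u : 𝕜} (hu1 : u ≠ 1) (hu2 : u ≠ -1) :
    det (1 - u • (((2 : 𝕜) • (L * M) - 1) * ((2 : 𝕜) • (K * N) - 1))) =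
      (1 - u) ^ ((Fintype.card E : ℤ) - Fintype.card X - Fintype.card Y) *
        (1 + u) ^ ((Fintype.card Y : ℤ) - Fintype.card X) *
        det ((1 + u) ^ 2 • 1 - (4 * u) • (N * L * M * K)) := by
  have hα : 1 - u ≠ 0 := sub_ne_zero.mpr hu1.symm
  have hβ : 1 + u ≠ 0 := fun h => hu2 (by linear_combination h)
  have hP : IsIdempotentElem (L * M) := by
    rw [IsIdempotentElem, Matrix.mul_assoc, ← Matrix.mul_assoc M, hML, Matrix.one_mul]
  rw [one_sub_smul_reflection_mul_reflection, show 2 * u = (1 + u) - (1 - u) by ring,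
    show 4 * u = (1 + u) ^ 2 - (1 - u) ^ 2 by ring, Matrix.mul_assoc N L,
    det_smul_one_sub_add_smul_add_smul_mul_of_isIdempotentElem hP hNK hα hβ,
    det_smul_one_sub_add_smul_of_mul_eq_one hML hα]
  simp only [zpow_sub₀ hα, zpow_sub₀ hβ, zpow_natCast, mul_inv, mul_pow]
  ring

end Matrix

/-- Theorem 4.2: characteristic polynomial of the evolution matrix of a 2-tessellable
staggered quantum walk. Here `E` is the edge set of a bipartite multigraph with partite
sets `X`, `Y` and endpoint maps `d0`, `d1`; `K` and `L` are the weighted incidence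
matrices built from amplitudes `a`, `b`, `U₀ = 2 K Kᴴ - I`, `U₁ = 2 L Lᴴ - I`,
`U = U₁ U₀`, and `Â = Kᴴ L Lᴴ K`. -/
theorem staggered_two_tessellable_char_poly
    {X Y E : Type*} [Fintype X] [Fintype Y] [Fintype E]
    [DecidableEq X] [DecidableEq Y] [DecidableEq E]
    (m n ν : ℕ) (hm : Fintype.card X = m) (hn : Fintype.card Y = n)
    (hν : Fintype.card E = ν)
    (d0 : E → X) (d1 : E → Y) (a b : E → ℂ)
    (ha : ∀ x : X, ∑ e ∈ Finset.univ.filter (fun e => d0 e = x), ‖a e‖ ^ 2 = 1)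
    (hb : ∀ y : Y, ∑ e ∈ Finset.univ.filter (fun e => d1 e = y), ‖b e‖ ^ 2 = 1)
    (K : Matrix E X ℂ) (hK : K = Matrix.of fun e x => if d0 e = x then a e else 0)
    (L : Matrix E Y ℂ) (hL : L = Matrix.of fun e y => if d1 e = y then b e else 0)
    (u : ℂ) (hu1 : u ≠ 1) (hu2 : u ≠ -1) :
    det ((1 : Matrix E E ℂ) -
        u • (((2 : ℂ) • (L * Lᴴ) - 1) * ((2 : ℂ) • (K * Kᴴ) - 1)))
      = (1 - u) ^ ((ν : ℤ) - (m : ℤ) - (n : ℤ)) * (1 + u) ^ ((n : ℤ) - (m : ℤ)) *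
        det ((1 + u) ^ 2 • (1 : Matrix X X ℂ) - (4 * u) • (Kᴴ * L * Lᴴ * K)) := by
  subst hm hn hν hK hL
  exact det_one_sub_smul_reflection_mul_reflection
    (conjTranspose_mul_self_eq_one_of_sum_fiber_norm_sq d0 a ha)
    (conjTranspose_mul_self_eq_one_of_sum_fiber_norm_sq d1 b hb) hu1 hu2
end

section
/- Let X, Y, E be finite sets, ∂₀ : E → X and ∂₁ : E → Y maps, and p, q : E → ℝ nonnegative with Σ_{e : ∂₀(e)=x} p(e) = 1 for each x ∈ X and Σ_{e : ∂₁(e)=y} q(e) = 1 for each y ∈ Y. Define K_{e,x} = √(p(e)) if ∂₀(e) = x and 0 otherwise, L_{e,y} = √(q(e)) if ∂₁(e) = y and 0 otherwise, and let W = (2·L·ᵗL − I_ε)·(2·K·ᵗK − I_ε) be the Szegedy matrix and A_p = ᵗK·L·ᵗL·K. If λ is a complex number with λ ≠ 0, λ ≠ 1, λ ≠ −1 and det(λ·I_ε − W) = 0, then (λ+1)²/(4λ) is an eigenvalue of A_p, i.e., there exists a real θ with λ = e^(2iθ) or λ = e^(−2iθ) and cos²θ an eigenvalue of A_p. -/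
open Matrix

lemma szegedy_aux_iso {E A : Type*} [Fintype E] [Fintype A] [DecidableEq A]
    (d : E → A) (p : E → ℝ) (hp0 : ∀ e, 0 ≤ p e)
    (hp : ∀ a : A, ∑ e ∈ Finset.univ.filter (fun e => d e = a), p e = 1)
    (K : Matrix E A ℂ)
    (hK : K = Matrix.of fun e a => if d e = a then (Real.sqrt (p e) : ℂ) else 0) :
    Kᵀ * K = 1 := by
  subst hK
  ext a b
  simp only [Matrix.mul_apply, Matrix.transpose_apply, Matrix.of_apply]
  by_cases h : a = b
  · subst h
    rw [Matrix.one_apply_eq]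
    have hterm : ∀ e : E, (if d e = a then (Real.sqrt (p e):ℂ) else 0) *
        (if d e = a then (Real.sqrt (p e):ℂ) else 0) = if d e = a then ((p e : ℂ)) else 0 := by
      intro e
      split
      · rw [← Complex.ofReal_mul, Real.mul_self_sqrt (hp0 e)]
      · simp
    rw [Finset.sum_congr rfl fun e _ => hterm e, ← Finset.sum_filter]
    rw [← Complex.ofReal_sum, hp a, Complex.ofReal_one]
  · rw [Matrix.one_apply_ne h]
    apply Finset.sum_eq_zero
    intro e _
    split_ifs with h1 h2
    · exact absurd (h1.symm.trans h2) h
    all_goals ring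


/-- If `λ ∉ {0, 1, -1}` is an eigenvalue of the Szegedy matrix
`W = (2 L ᵗL - I)(2 K ᵗK - I)`, then `(λ+1)²/(4λ)` is an eigenvalue of
`A_p = ᵗK L ᵗL K`. -/
theorem szegedy_eigenvalue_correspondence
    {X Y E : Type*} [Fintype X] [Fintype Y] [Fintype E]
    [DecidableEq X] [DecidableEq Y] [DecidableEq E]
    (d0 : E → X) (d1 : E → Y) (p q : E → ℝ)
    (hp0 : ∀ e, 0 ≤ p e) (hq0 : ∀ e, 0 ≤ q e)
    (hp : ∀ x : X, ∑ e ∈ Finset.univ.filter (fun e => d0 e = x), p e = 1)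
    (hq : ∀ y : Y, ∑ e ∈ Finset.univ.filter (fun e => d1 e = y), q e = 1)
    (K : Matrix E X ℂ)
    (hK : K = Matrix.of fun e x => if d0 e = x then (Real.sqrt (p e) : ℂ) else 0)
    (L : Matrix E Y ℂ)
    (hL : L = Matrix.of fun e y => if d1 e = y then (Real.sqrt (q e) : ℂ) else 0)
    (lam : ℂ) (h0 : lam ≠ 0) (h1 : lam ≠ 1) (h2 : lam ≠ -1)
    (hev : det (lam • (1 : Matrix E E ℂ) -
        ((2 : ℂ) • (L * Lᵀ) - 1) * ((2 : ℂ) • (K * Kᵀ) - 1)) = 0) :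
    det (((lam + 1) ^ 2 / (4 * lam)) • (1 : Matrix X X ℂ) - Kᵀ * L * Lᵀ * K) = 0 := by
  have hKK : Kᵀ * K = 1 := szegedy_aux_iso d0 p hp0 hp K hK
  have hLL : Lᵀ * L = 1 := szegedy_aux_iso d1 q hq0 hq L hL
  have hl1 : lam + 1 ≠ 0 := fun h => h2 (by linear_combination h)
  obtain ⟨v, hv, hveq⟩ := (Matrix.exists_mulVec_eq_zero_iff).2 hev
  have hWv : (((2 : ℂ) • (L * Lᵀ) - 1) * ((2 : ℂ) • (K * Kᵀ) - 1)) *ᵥ v = lam • v := by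
    rw [Matrix.sub_mulVec, sub_eq_zero, Matrix.smul_mulVec, Matrix.one_mulVec] at hveq
    exact hveq.symm
  set x := Kᵀ *ᵥ v with hxdef
  set y := Lᵀ *ᵥ v with hydef
  set u := (2:ℂ) • (K *ᵥ x) - v with hudef
  have hstar : lam • v = (2:ℂ) • (L *ᵥ (Lᵀ *ᵥ u)) - u := by
    have hu : ((2 : ℂ) • (K * Kᵀ) - 1) *ᵥ v = u := by
      rw [hudef, hxdef, Matrix.sub_mulVec, Matrix.smul_mulVec, Matrix.one_mulVec,
        ← Matrix.mulVec_mulVec]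
    rw [← hWv, ← Matrix.mulVec_mulVec, hu, Matrix.sub_mulVec, Matrix.smul_mulVec,
      Matrix.one_mulVec, ← Matrix.mulVec_mulVec]
  have hKu : Kᵀ *ᵥ u = x := by
    rw [hudef]
    simp only [Matrix.mulVec_sub, Matrix.mulVec_smul, Matrix.mulVec_mulVec]
    rw [hKK, Matrix.one_mulVec, ← hxdef, two_smul]
    abel
  have hLu : Lᵀ *ᵥ u = lam • y := by
    have h3 := congrArg (fun w => Lᵀ *ᵥ w) hstar
    simp only [Matrix.mulVec_smul, Matrix.mulVec_sub, Matrix.mulVec_mulVec] at h3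
    rw [show Lᵀ * (L * Lᵀ) = Lᵀ from by rw [← Matrix.mul_assoc, hLL, Matrix.one_mul],
      two_smul] at h3
    try rw [← hydef] at h3
    rw [h3]; abel
  have heqb : (lam + 1) • y = (2:ℂ) • ((Lᵀ*K) *ᵥ x) := by
    have h5 : lam • y = (2:ℂ) • ((Lᵀ*K) *ᵥ x) - y := by
      rw [← hLu, hudef]
      simp only [Matrix.mulVec_sub, Matrix.mulVec_smul, Matrix.mulVec_mulVec]
      try rw [← hydef]
    rw [add_smul, one_smul, h5]; abel
  have heqa : (lam + 1) • x = (2*lam) • ((Kᵀ*L) *ᵥ y) := by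
    have h3 := congrArg (fun w => Kᵀ *ᵥ w) hstar
    simp only [Matrix.mulVec_smul, Matrix.mulVec_sub, Matrix.mulVec_mulVec] at h3
    try rw [← hxdef] at h3
    rw [hKu] at h3
    have h6 : (Kᵀ * (L * Lᵀ)) *ᵥ u = lam • ((Kᵀ*L) *ᵥ y) := by
      rw [show Kᵀ * (L*Lᵀ) = (Kᵀ*L)*Lᵀ from (Matrix.mul_assoc _ _ _).symm,
        ← Matrix.mulVec_mulVec, hLu, Matrix.mulVec_smul]
    rw [h6, smul_smul] at h3
    rw [add_smul, one_smul, h3, mul_comm]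
    abel
  have hkey : ((lam + 1)^2) • x = (4*lam) • ((Kᵀ * L * Lᵀ * K) *ᵥ x) := by
    have h7 : (lam + 1) • ((Kᵀ*L) *ᵥ y) = (2:ℂ) • ((Kᵀ*L*Lᵀ*K) *ᵥ x) := by
      rw [← Matrix.mulVec_smul, heqb, Matrix.mulVec_smul, Matrix.mulVec_mulVec,
        ← Matrix.mul_assoc]
    calc ((lam + 1)^2) • x = (lam+1) • ((lam+1) • x) := by
          rw [sq, mul_smul]
      _ = (lam+1) • ((2*lam) • ((Kᵀ*L) *ᵥ y)) := by rw [heqa]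
      _ = (2*lam) • ((lam+1) • ((Kᵀ*L) *ᵥ y)) := smul_comm _ _ _
      _ = (2*lam) • ((2:ℂ) • ((Kᵀ*L*Lᵀ*K) *ᵥ x)) := by rw [h7]
      _ = (4*lam) • ((Kᵀ * L * Lᵀ * K) *ᵥ x) := by
          rw [smul_smul]; congr 1; ring
  have hx : x ≠ 0 := by
    intro hx0
    have hy0 : y = 0 := by
      have hb := heqb
      rw [hx0, Matrix.mulVec_zero, smul_zero] at hb
      exact (smul_eq_zero.mp hb).resolve_left hl1
    have hu0 : u = -v := by
      rw [hudef, hx0, Matrix.mulVec_zero, smul_zero, zero_sub]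
    have hLu0 : Lᵀ *ᵥ u = 0 := by rw [hLu, hy0, smul_zero]
    rw [hLu0, Matrix.mulVec_zero, smul_zero, hu0, zero_sub, neg_neg] at hstar
    have : (lam - 1) • v = 0 := by rw [sub_smul, one_smul, hstar, sub_self]
    rcases smul_eq_zero.mp this with h | h
    · exact h1 (by linear_combination h)
    · exact hv h
  apply Matrix.exists_mulVec_eq_zero_iff.mp
  refine ⟨x, hx, ?_⟩
  rw [Matrix.sub_mulVec, Matrix.smul_mulVec, Matrix.one_mulVec, sub_eq_zero]
  have h4l : (4*lam) ≠ 0 := by simp [h0]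
  rw [div_eq_mul_inv, mul_comm ((lam+1)^2) _, mul_smul, hkey, smul_smul,
    inv_mul_cancel₀ h4l, one_smul]
end

section
/- Let G be a connected simple graph with n vertices v₁,…,vₙ and m edges, in which every vertex has degree at least 1. Let D(G) be the set of 2m arcs (darts) of G, and let U be the 2m×2m Grover matrix indexed by arcs, with U_{ef} = 2/deg(t(f)) if t(f) = o(e) and f ≠ e⁻¹, U_{ef} = 2/deg(t(f)) − 1 if f = e⁻¹, and U_{ef} = 0 otherwise, where o(e), t(e) denote the origin and terminus of an arc e and e⁻¹ its reverse. Let T(G) be the n×n matrix with T_{uv} = 1/deg(u) if u and v are adjacent and 0 otherwise. Then for every complex number λ with λ ≠ 1 and λ ≠ −1, det(λ·I_{2m} − U) = (λ²−1)^(m−n) · det((λ²+1)·I_n − 2λ·T(G)) = (λ²−1)^(m−n) · det((λ²+1)·D − 2λ·A(G)) / (deg v₁ ⋯ deg vₙ), where A(G) is the adjacency matrix of G, D is the diagonal degree matrix, and the exponent m−n is an integer (possibly negative). -/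
/-!
Let `S` be the arc-reversal permutation matrix and `F`, `L` the arc–vertex incidence matrices of
origins and termini. Then `U = 2 F D⁻¹ Lᵀ - S`, so `λ - U = (λ + S) - 2 F D⁻¹ Lᵀ` is a low-rank
perturbation of `λ + S`. Since `S² = 1`, `(λ + S)⁻¹ = (λ - S) / (λ² - 1)`, and pairing each arc with
its reverse splits `λ + S` into `m` blocks `!![λ, 1; 1, λ]`, so `det (λ + S) = (λ² - 1) ^ m`. The
matrix determinant lemma reduces `det (λ - U)` to an `n × n` determinant, which is computed from
`Lᵀ F = A` and `Lᵀ S F = Fᵀ F = D`.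
-/

open Matrix Finset
open scoped Kronecker

namespace SimpleGraph

variable {V : Type*} [Fintype V] [DecidableEq V] (G : SimpleGraph V) [DecidableRel G.Adj]
  (R : Type*) [CommRing R]

def dartSymmMatrix : Matrix G.Dart G.Dart R := of fun e f => if f = e.symm then 1 else 0

def dartFstMatrix : Matrix G.Dart V R := of fun e v => if e.fst = v then 1 else 0

def dartSndMatrix : Matrix G.Dart V R := of fun e v => if e.snd = v then 1 else 0

variable {R}

omit [Fintype V] [DecidableEq V] [DecidableRel G.Adj] in
theorem Dart.eq_symm_comm {e f : G.Dart} : f = e.symm ↔ e = f.symm :=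
  Dart.symm_involutive.eq_iff.symm.trans eq_comm

theorem dartSymmMatrix_mul_self : G.dartSymmMatrix R * G.dartSymmMatrix R = 1 := by
  ext e f
  simp only [dartSymmMatrix, mul_apply, of_apply, ite_mul, one_mul, zero_mul, sum_ite_eq',
    mem_univ, if_true, Dart.symm_symm, one_apply, eq_comm]

omit [Fintype V] [DecidableRel G.Adj] in
theorem transpose_dartSymmMatrix : (G.dartSymmMatrix R)ᵀ = G.dartSymmMatrix R := by
  ext e f
  simp [dartSymmMatrix, Dart.eq_symm_comm (f := f)]

theorem dartSymmMatrix_mul_dartFstMatrix :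
    G.dartSymmMatrix R * G.dartFstMatrix R = G.dartSndMatrix R := by
  ext e v
  simp only [dartSymmMatrix, dartFstMatrix, dartSndMatrix, mul_apply, of_apply, ite_mul, one_mul,
    zero_mul, sum_ite_eq', mem_univ, if_true, Dart.symm_toProd, Prod.fst_swap]

theorem dartSymmMatrix_mul_dartSndMatrix :
    G.dartSymmMatrix R * G.dartSndMatrix R = G.dartFstMatrix R := by
  rw [← dartSymmMatrix_mul_dartFstMatrix, ← Matrix.mul_assoc, dartSymmMatrix_mul_self,
    Matrix.one_mul]

theorem transpose_dartFstMatrix_mul_self :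
    (G.dartFstMatrix R)ᵀ * G.dartFstMatrix R = diagonal fun v => (G.degree v : R) := by
  ext u v
  simp only [dartFstMatrix, mul_apply, transpose_apply, of_apply, boole_mul, ← ite_and,
    diagonal_apply]
  split_ifs with huv
  · subst huv
    simp only [and_self, sum_boole, G.dart_fst_fiber_card_eq_degree]
  · exact sum_eq_zero fun d _ => if_neg fun h => huv (h.1.symm.trans h.2)

theorem transpose_dartSndMatrix_mul_dartFstMatrix :
    (G.dartSndMatrix R)ᵀ * G.dartFstMatrix R = G.adjMatrix R := by
  ext u v
  simp only [dartSndMatrix, dartFstMatrix, mul_apply, transpose_apply, of_apply, boole_mul,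
    ← ite_and, adjMatrix_apply]
  split_ifs with huv
  · have hdart (d : G.Dart) : d.snd = u ∧ d.fst = v ↔ d = ⟨(v, u), huv.symm⟩ := by
      rw [Dart.ext_iff, Prod.ext_iff, and_comm]
    simp only [hdart, sum_ite_eq', mem_univ, if_true]
  · exact sum_eq_zero fun d _ => if_neg fun ⟨hu, hv⟩ => huv (hu ▸ hv ▸ d.adj.symm)

theorem transpose_dartSndMatrix_mul_dartSymmMatrix_mul_dartFstMatrix :
    (G.dartSndMatrix R)ᵀ * G.dartSymmMatrix R * G.dartFstMatrix R =
      diagonal fun v => (G.degree v : R) := by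
  rw [← G.transpose_dartSymmMatrix, ← transpose_mul, dartSymmMatrix_mul_dartSndMatrix,
    transpose_dartFstMatrix_mul_self]

theorem smul_one_add_dartSymmMatrix_mul_sub (lam : R) :
    (lam • 1 + G.dartSymmMatrix R) * (lam • 1 - G.dartSymmMatrix R) = (lam ^ 2 - 1) • 1 := by
  rw [add_mul, mul_sub, mul_sub, dartSymmMatrix_mul_self]
  simp only [Matrix.smul_mul, Matrix.mul_smul, Matrix.one_mul, Matrix.mul_one, smul_smul]
  module

section Orientation

variable [LinearOrder V]

def orientedDartEquiv : {d : G.Dart // d.fst < d.snd} × Fin 2 ≃ G.Dart where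
  toFun p := ![p.1.1, p.1.1.symm] p.2
  invFun d := if h : d.fst < d.snd then (⟨d, h⟩, 0)
    else (⟨d.symm, (not_lt.mp h).lt_of_ne d.snd_ne_fst⟩, 1)
  left_inv := by
    rintro ⟨⟨d, hd⟩, i⟩
    fin_cases i
    · simp [hd]
    · simp [lt_asymm hd]
  right_inv d := by
    by_cases h : d.fst < d.snd <;> simp [h]

omit [Fintype V] [DecidableEq V] [DecidableRel G.Adj] in
theorem orientedDartEquiv_rev (p : {d : G.Dart // d.fst < d.snd}) (i : Fin 2) :
    G.orientedDartEquiv (p, i.rev) = (G.orientedDartEquiv (p, i)).symm := by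
  fin_cases i <;> simp [orientedDartEquiv]

omit [DecidableEq V] in
theorem card_orientedDarts :
    Fintype.card {d : G.Dart // d.fst < d.snd} = #G.edgeFinset := by
  have h := Fintype.card_congr G.orientedDartEquiv
  rw [Fintype.card_prod, Fintype.card_fin, dart_card_eq_twice_card_edges] at h
  omega

end Orientation

theorem det_smul_one_add_dartSymmMatrix (lam : R) :
    det (lam • 1 + G.dartSymmMatrix R) = (lam ^ 2 - 1) ^ #G.edgeFinset := by
  -- any orientation of the edges will do
  let _ : LinearOrder V := LinearOrder.lift' _ (Fintype.equivFin V).injective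
  have hblocks :
      (lam • 1 + G.dartSymmMatrix R).submatrix G.orientedDartEquiv G.orientedDartEquiv =
        (1 : Matrix {d : G.Dart // d.fst < d.snd} _ R) ⊗ₖ !![lam, 1; 1, lam] := by
    ext ⟨p, i⟩ ⟨q, j⟩
    simp only [submatrix_apply, Matrix.add_apply, Matrix.smul_apply, one_apply, dartSymmMatrix,
      of_apply, ← orientedDartEquiv_rev, Equiv.apply_eq_iff_eq, Prod.mk.injEq, kronecker_apply]
    by_cases hpq : p = q
    · subst hpq
      fin_cases i <;> fin_cases j <;> simp
    · simp [hpq, Ne.symm hpq]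
  rw [← det_submatrix_equiv_self G.orientedDartEquiv, hblocks, det_kronecker, det_one, one_pow,
    one_mul, det_fin_two_of, card_orientedDarts]
  ring_nf

variable (K : Type*) [Field K]

def groverMatrix : Matrix G.Dart G.Dart K := of fun e f =>
  if f.snd = e.fst then
    (if f = e.symm then 2 / (G.degree f.snd : K) - 1 else 2 / (G.degree f.snd : K))
  else 0

def transitionMatrix : Matrix V V K :=
  of fun u v => if G.Adj u v then 1 / (G.degree u : K) else 0

variable {K}

theorem groverMatrix_eq :
    G.groverMatrix K = (2 : K) • (G.dartFstMatrix K * diagonal (fun v => (G.degree v : K)⁻¹) *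
      (G.dartSndMatrix K)ᵀ) - G.dartSymmMatrix K := by
  ext e f
  simp only [groverMatrix, dartFstMatrix, dartSndMatrix, dartSymmMatrix, Matrix.sub_apply,
    Matrix.smul_apply, mul_apply, of_apply, transpose_apply, diagonal_apply, ite_mul, one_mul,
    zero_mul, sum_ite_eq, mem_univ, if_true]
  by_cases hfe : f.snd = e.fst
  · rw [hfe]
    by_cases hsymm : f = e.symm <;> simp [hsymm, div_eq_mul_inv]
  · have hsymm : f ≠ e.symm := fun h => hfe (h ▸ rfl)
    simp [hfe, hsymm]

theorem transitionMatrix_eq :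
    G.transitionMatrix K = diagonal (fun v => (G.degree v : K)⁻¹) * G.adjMatrix K := by
  ext u v
  simp only [transitionMatrix, diagonal_mul, adjMatrix_apply, of_apply, mul_boole, one_div]

theorem diagonal_degree_mul_transitionMatrix (hdeg : ∀ v, (G.degree v : K) ≠ 0) :
    diagonal (fun v => (G.degree v : K)) * G.transitionMatrix K = G.adjMatrix K := by
  simp only [transitionMatrix_eq, ← Matrix.mul_assoc, diagonal_mul_diagonal,
    mul_inv_cancel₀ (hdeg _), diagonal_one, Matrix.one_mul]

theorem det_smul_one_sub_groverMatrix (hdeg : ∀ v, (G.degree v : K) ≠ 0) {lam : K}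
    (hlam : lam ^ 2 - 1 ≠ 0) :
    det (lam • 1 - G.groverMatrix K) = (lam ^ 2 - 1) ^ #G.edgeFinset *
      det ((lam ^ 2 - 1)⁻¹ • ((lam ^ 2 + 1) • 1 - (2 * lam) • G.transitionMatrix K)) := by
  have hdetX := G.det_smul_one_add_dartSymmMatrix lam
  have hinv : (lam • 1 + G.dartSymmMatrix K)⁻¹ =
      (lam ^ 2 - 1)⁻¹ • (lam • 1 - G.dartSymmMatrix K) :=
    inv_eq_right_inv <| by
      rw [Matrix.mul_smul, smul_one_add_dartSymmMatrix_mul_sub, smul_smul, inv_mul_cancel₀ hlam,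
        one_smul]
  have hsplit : lam • 1 - G.groverMatrix K = (lam • 1 + G.dartSymmMatrix K) +
      -G.dartFstMatrix K *
        ((2 : K) • (diagonal (fun v => (G.degree v : K)⁻¹) * (G.dartSndMatrix K)ᵀ)) := by
    rw [groverMatrix_eq]
    simp only [Matrix.neg_mul, Matrix.mul_smul, Matrix.mul_assoc]
    module
  have hLXF : (G.dartSndMatrix K)ᵀ * (lam • 1 - G.dartSymmMatrix K) * G.dartFstMatrix K =
      lam • G.adjMatrix K - diagonal fun v => (G.degree v : K) := by
    rw [Matrix.mul_sub, Matrix.sub_mul, Matrix.mul_smul, Matrix.mul_one, Matrix.smul_mul,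
      transpose_dartSndMatrix_mul_dartFstMatrix,
      transpose_dartSndMatrix_mul_dartSymmMatrix_mul_dartFstMatrix]
  have hDinvD :
      (diagonal fun v => (G.degree v : K)⁻¹) * diagonal (fun v => (G.degree v : K)) = 1 := by
    rw [diagonal_mul_diagonal, ← diagonal_one]
    exact congrArg diagonal (funext fun v => inv_mul_cancel₀ (hdeg v))
  rw [hsplit, det_add_mul _ _ (hdetX ▸ hlam.isUnit.pow _), hdetX, hinv]
  congr 2
  simp only [Matrix.smul_mul, Matrix.mul_smul, Matrix.mul_neg]
  rw [Matrix.mul_assoc (diagonal _), Matrix.mul_assoc (diagonal _), hLXF, Matrix.mul_sub,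
    Matrix.mul_smul, hDinvD, ← transitionMatrix_eq]
  match_scalars <;> field_simp; ring

end SimpleGraph

theorem konno_sato_grover_char_poly_general
    (n m : ℕ) (G : SimpleGraph (Fin n)) [DecidableRel G.Adj]
    (hdeg : ∀ v, 1 ≤ G.degree v)
    (hm : G.edgeFinset.card = m)
    (U : Matrix G.Dart G.Dart ℂ)
    (hU : U = Matrix.of fun e f =>
      if f.snd = e.fst then
        (if f = e.symm then 2 / (G.degree f.snd : ℂ) - 1 else 2 / (G.degree f.snd : ℂ))
      else 0)
    (T : Matrix (Fin n) (Fin n) ℂ)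
    (hT : T = Matrix.of fun u v => if G.Adj u v then 1 / (G.degree u : ℂ) else 0)
    (lam : ℂ) (h1 : lam ≠ 1) (h2 : lam ≠ -1) :
    det (lam • (1 : Matrix G.Dart G.Dart ℂ) - U)
        = (lam ^ 2 - 1) ^ ((m : ℤ) - (n : ℤ)) *
            det ((lam ^ 2 + 1) • (1 : Matrix (Fin n) (Fin n) ℂ) - (2 * lam) • T) ∧
      det (lam • (1 : Matrix G.Dart G.Dart ℂ) - U)
        = (lam ^ 2 - 1) ^ ((m : ℤ) - (n : ℤ)) *
            det ((lam ^ 2 + 1) • Matrix.diagonal (fun v => (G.degree v : ℂ)) -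
              (2 * lam) • (G.adjMatrix ℂ)) /
            ∏ v : Fin n, (G.degree v : ℂ) := by
  replace hU : U = G.groverMatrix ℂ := hU
  replace hT : T = G.transitionMatrix ℂ := hT
  have hdeg' (v : Fin n) : (G.degree v : ℂ) ≠ 0 := by
    exact_mod_cast Nat.one_le_iff_ne_zero.mp (hdeg v)
  have hlam : lam ^ 2 - 1 ≠ 0 := by
    rw [show lam ^ 2 - 1 = (lam - 1) * (lam + 1) by ring]
    exact mul_ne_zero (sub_ne_zero.mpr h1) (by rwa [ne_eq, add_eq_zero_iff_eq_neg])
  have hfirst : det (lam • (1 : Matrix G.Dart G.Dart ℂ) - U) = (lam ^ 2 - 1) ^ ((m : ℤ) - n) *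
      det ((lam ^ 2 + 1) • (1 : Matrix (Fin n) (Fin n) ℂ) - (2 * lam) • T) := by
    rw [hU, hT, G.det_smul_one_sub_groverMatrix hdeg' hlam, det_smul, Fintype.card_fin, hm,
      zpow_sub₀ hlam, zpow_natCast, zpow_natCast, div_eq_mul_inv, inv_pow, mul_assoc]
  have hsecond : det ((lam ^ 2 + 1) • diagonal (fun v => (G.degree v : ℂ)) -
      (2 * lam) • G.adjMatrix ℂ) = (∏ v, (G.degree v : ℂ)) *
        det ((lam ^ 2 + 1) • (1 : Matrix (Fin n) (Fin n) ℂ) - (2 * lam) • T) := by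
    rw [← det_diagonal, ← det_mul, Matrix.mul_sub, Matrix.mul_smul, Matrix.mul_smul,
      Matrix.mul_one, hT, G.diagonal_degree_mul_transitionMatrix hdeg']
  refine ⟨hfirst, ?_⟩
  rw [hfirst, hsecond, mul_div_assoc,
    mul_div_cancel_left₀ _ (prod_ne_zero_iff.mpr fun v _ => hdeg' v)]

/-- Konno–Sato theorem (Theorem 2.1): the characteristic polynomial of the Grover matrix
`U` of a connected graph `G` with `n` vertices and `m` edges:
`det(λ I₂ₘ - U) = (λ²-1)^(m-n) det((λ²+1) Iₙ - 2λ T(G))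
               = (λ²-1)^(m-n) det((λ²+1) D - 2λ A(G)) / (d₁ ⋯ dₙ)`,
where `T(G)` is the random-walk transition matrix, `A(G)` the adjacency matrix and `D`
the diagonal degree matrix. Darts (oriented edges) index the Grover matrix. -/
theorem konno_sato_grover_char_poly
    (n m : ℕ) (G : SimpleGraph (Fin n)) [DecidableRel G.Adj]
    (hconn : G.Connected) (hdeg : ∀ v, 1 ≤ G.degree v)
    (hm : G.edgeFinset.card = m)
    (U : Matrix G.Dart G.Dart ℂ)
    (hU : U = Matrix.of fun e f =>
      if f.snd = e.fst then
        (if f = e.symm then 2 / (G.degree f.snd : ℂ) - 1 else 2 / (G.degree f.snd : ℂ))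
      else 0)
    (T : Matrix (Fin n) (Fin n) ℂ)
    (hT : T = Matrix.of fun u v => if G.Adj u v then 1 / (G.degree u : ℂ) else 0)
    (lam : ℂ) (h1 : lam ≠ 1) (h2 : lam ≠ -1) :
    det (lam • (1 : Matrix G.Dart G.Dart ℂ) - U)
        = (lam ^ 2 - 1) ^ ((m : ℤ) - (n : ℤ)) *
            det ((lam ^ 2 + 1) • (1 : Matrix (Fin n) (Fin n) ℂ) - (2 * lam) • T) ∧
      det (lam • (1 : Matrix G.Dart G.Dart ℂ) - U)
        = (lam ^ 2 - 1) ^ ((m : ℤ) - (n : ℤ)) *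
            det ((lam ^ 2 + 1) • Matrix.diagonal (fun v => (G.degree v : ℂ)) -
              (2 * lam) • (G.adjMatrix ℂ)) /
            ∏ v : Fin n, (G.degree v : ℂ) :=
  konno_sato_grover_char_poly_general n m G hdeg hm U hU T hT lam h1 h2
end

section
/- Let G be a connected simple graph with n vertices and m edges in which every vertex has degree at least 1, let U be the 2m×2m Grover matrix of G (with U_{ef} = 2/deg(t(f)) if t(f) = o(e) and f ≠ e⁻¹, U_{ef} = 2/deg(t(f)) − 1 if f = e⁻¹, and 0 otherwise), and let T(G) be the n×n random-walk transition matrix of G (T_{uv} = 1/deg(u) if u ∼ v, else 0). If μ is a real eigenvalue of T(G) with −1 ≤ μ ≤ 1, then both complex numbers λ = μ + i·√(1−μ²) and λ = μ − i·√(1−μ²) satisfy det(λ·I_{2m} − U) = 0, i.e., they are eigenvalues of U. -/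
open Matrix

section Aux

variable {n : ℕ} (G : SimpleGraph (Fin n)) [DecidableRel G.Adj]

/-- Sum over darts with a fixed head equals sum over neighbors. -/
lemma sum_darts_snd_eq (u : Fin n) (g : Fin n → ℂ) :
    ∑ d ∈ Finset.univ.filter (fun d : G.Dart => d.snd = u), g d.fst
      = ∑ w ∈ G.neighborFinset u, g w := by
  refine Finset.sum_bij (fun d _ => d.fst) ?_ ?_ ?_ ?_
  · intro d hd
    simp only [Finset.mem_filter, Finset.mem_univ, true_and] at hd
    simp only [SimpleGraph.mem_neighborFinset]
    exact (hd ▸ d.adj).symm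
  · intro d1 hd1 d2 hd2 h
    simp only [Finset.mem_filter, Finset.mem_univ, true_and] at hd1 hd2
    exact SimpleGraph.Dart.ext _ _ (Prod.ext h (hd1.trans hd2.symm))
  · intro w hw
    simp only [SimpleGraph.mem_neighborFinset] at hw
    exact ⟨SimpleGraph.Dart.mk (w, u) hw.symm, by simp, rfl⟩
  · intro d hd; rfl

lemma card_darts_snd (u : Fin n) :
    (Finset.univ.filter (fun d : G.Dart => d.snd = u)).card = G.degree u := by
  have := sum_darts_snd_eq G u (fun _ => (1 : ℂ))
  simp only [Finset.sum_const, nsmul_eq_mul, mul_one] at this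
  exact_mod_cast this

lemma grover_aux (hdeg : ∀ v, 1 ≤ G.degree v)
    (U : Matrix G.Dart G.Dart ℂ)
    (hU : U = Matrix.of fun e f =>
      if f.snd = e.fst then
        (if f = e.symm then 2 / (G.degree f.snd : ℂ) - 1 else 2 / (G.degree f.snd : ℂ))
      else 0)
    (μ : ℂ) (f : Fin n → ℂ) (hf : f ≠ 0)
    (hTf : ∀ u, ∑ w ∈ G.neighborFinset u, f w = (G.degree u : ℂ) * μ * f u)
    (l : ℂ) (hl : l ^ 2 - 2 * μ * l + 1 = 0) (hlr : l ^ 2 = 1 → l = μ) :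
    det (l • (1 : Matrix G.Dart G.Dart ℂ) - U) = 0 := by
  have hdegC : ∀ v, (G.degree v : ℂ) ≠ 0 := by
    intro v
    have h := hdeg v
    exact_mod_cast (by omega : G.degree v ≠ 0)
  have key : ∀ (ψ : G.Dart → ℂ) (e : G.Dart),
      U.mulVec ψ e = 2 / (G.degree e.fst : ℂ) *
        (∑ d ∈ Finset.univ.filter (fun d : G.Dart => d.snd = e.fst), ψ d) - ψ e.symm := by
    intro ψ e
    have hUe : ∀ d : G.Dart, U e d =
        (if d.snd = e.fst then 2 / (G.degree e.fst : ℂ) else 0)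
          - (if d = e.symm then 1 else 0) := by
      intro d
      subst hU
      by_cases h1 : d = e.symm
      · subst h1; simp [SimpleGraph.Dart.symm]
      · by_cases h2 : d.snd = e.fst
        · simp only [Matrix.of_apply, if_pos h2, if_neg h1, sub_zero]
          rw [h2]
        · simp [h1, h2]
    simp only [Matrix.mulVec, dotProduct]
    calc ∑ d, U e d * ψ d
        = ∑ d, ((if d.snd = e.fst then 2 / (G.degree e.fst : ℂ) * ψ d else 0)
            - (if d = e.symm then ψ d else 0)) := by
          refine Finset.sum_congr rfl fun d _ => ?_
          rw [hUe d, sub_mul]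
          congr 1 <;> split <;> simp
      _ = (∑ d, (if d.snd = e.fst then 2 / (G.degree e.fst : ℂ) * ψ d else 0))
            - ∑ d, (if d = e.symm then ψ d else 0) := by
          rw [Finset.sum_sub_distrib]
      _ = _ := by
          rw [Finset.sum_ite_eq' Finset.univ e.symm ψ]
          simp only [Finset.mem_univ, if_true]
          congr 1
          rw [← Finset.sum_filter, Finset.mul_sum]
  rw [← Matrix.exists_mulVec_eq_zero_iff]
  by_cases hcase : ∀ e : G.Dart, f e.snd = l * f e.fst
  · obtain ⟨v, hv⟩ : ∃ v, f v ≠ 0 := by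
      by_contra h
      push_neg at h
      exact hf (funext h)
    obtain ⟨w, hw⟩ : ∃ w, w ∈ G.neighborFinset v := by
      have := hdeg v
      rw [← G.card_neighborFinset_eq_degree] at this
      exact (Finset.card_pos.mp this).exists_mem
    rw [SimpleGraph.mem_neighborFinset] at hw
    have h1 : f w = l * f v := hcase (SimpleGraph.Dart.mk (v, w) hw)
    have h2 : f v = l * f w := hcase (SimpleGraph.Dart.mk (w, v) hw.symm)
    have hl2 : l ^ 2 = 1 := by
      have h3 : (l ^ 2 - 1) * f v = 0 := by
        have : f v = l ^ 2 * f v := by rw [sq, mul_assoc, ← h1, ← h2]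
        linear_combination -this
      rcases mul_eq_zero.mp h3 with h4 | h4
      · linear_combination h4
      · exact absurd h4 hv
    have hlμ : l = μ := hlr hl2
    refine ⟨fun d => f d.fst, ?_, ?_⟩
    · intro h0
      have := congrFun h0 (SimpleGraph.Dart.mk (v, w) hw)
      exact hv this
    · funext e
      have hBe : U.mulVec (fun d => f d.fst) e = (2 * μ - l) * f e.fst := by
        rw [key]
        rw [sum_darts_snd_eq G e.fst f, hTf e.fst]
        have hs : f e.symm.fst = f e.snd := rfl
        rw [hs, hcase e]
        linear_combination 2 * μ * f e.fst * mul_inv_cancel₀ (hdegC e.fst)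
      simp only [Matrix.sub_mulVec, Matrix.smul_mulVec, Matrix.one_mulVec,
        Pi.sub_apply, Pi.smul_apply, smul_eq_mul, hBe, Pi.zero_apply]
      rw [hlμ]
      ring
  · push_neg at hcase
    obtain ⟨e0, he0⟩ := hcase
    refine ⟨fun d => f d.snd - l * f d.fst, ?_, ?_⟩
    · intro h0
      have := congrFun h0 e0
      simp only [Pi.zero_apply] at this
      exact he0 (by linear_combination this)
    · funext e
      have hBe : U.mulVec (fun d => f d.snd - l * f d.fst) e
          = (1 - 2 * l * μ) * f e.fst + l * f e.snd := by
        rw [key]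
        have hsum : ∑ d ∈ Finset.univ.filter (fun d : G.Dart => d.snd = e.fst),
            (f d.snd - l * f d.fst)
            = (G.degree e.fst : ℂ) * f e.fst
              - l * ((G.degree e.fst : ℂ) * μ * f e.fst) := by
          rw [Finset.sum_sub_distrib]
          have hconst : ∑ d ∈ Finset.univ.filter (fun d : G.Dart => d.snd = e.fst),
              f d.snd = ∑ _d ∈ Finset.univ.filter (fun d : G.Dart => d.snd = e.fst),
              f e.fst := Finset.sum_congr rfl (fun d hd => by
                simp only [Finset.mem_filter, Finset.mem_univ, true_and] at hd
                rw [hd])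
          congr 1
          · rw [hconst, Finset.sum_const, card_darts_snd G e.fst, nsmul_eq_mul]
          · rw [← Finset.mul_sum, sum_darts_snd_eq G e.fst f, hTf e.fst]
        rw [hsum]
        have hs1 : f e.symm.snd = f e.fst := rfl
        have hs2 : f e.symm.fst = f e.snd := rfl
        rw [hs1, hs2]
        linear_combination (2 * f e.fst - 2 * l * μ * f e.fst) *
          mul_inv_cancel₀ (hdegC e.fst)
      simp only [Matrix.sub_mulVec, Matrix.smul_mulVec, Matrix.one_mulVec,
        Pi.sub_apply, Pi.smul_apply, smul_eq_mul, hBe, Pi.zero_apply]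
      linear_combination (-(f e.fst)) * hl

lemma quad_root (μ s : ℝ) (h : (s : ℂ) ^ 2 = 1 - (μ : ℂ) ^ 2) (l : ℂ)
    (hle : l = (μ : ℂ) + Complex.I * s ∨ l = (μ : ℂ) - Complex.I * s) :
    l ^ 2 - 2 * (μ : ℂ) * l + 1 = 0 := by
  rcases hle with h1 | h1 <;> subst h1 <;>
    linear_combination (s : ℂ) ^ 2 * Complex.I_sq - h

lemma quad_real (μ s : ℝ) (l : ℂ)
    (hle : l = (μ : ℂ) + Complex.I * s ∨ l = (μ : ℂ) - Complex.I * s)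
    (hμl : (μ : ℂ) * l = 1) : l = (μ : ℂ) := by
  rcases hle with h1 | h1 <;> subst h1 <;>
  · have hre := congrArg Complex.re hμl
    have him := congrArg Complex.im hμl
    simp [Complex.mul_re, Complex.mul_im] at hre him
    have hμ0 : μ ≠ 0 := fun h => by simp [h] at hre
    have hs0 : s = 0 := by
      rcases him with h | h
      · exact absurd h hμ0
      · exact h
    simp [hs0]

end Aux

/-- Corollary 2.2 (Emms–Hancock–Severini–Wilson): if `μ ∈ [-1,1]` is a real eigenvalue
of the random-walk transition matrix `T(G)` of a connected graph `G`, then both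
`λ = μ ± i√(1-μ²)` are eigenvalues of the Grover matrix `U` of `G`. -/
theorem grover_eigenvalues_from_transition_matrix
    (n m : ℕ) (G : SimpleGraph (Fin n)) [DecidableRel G.Adj]
    (hconn : G.Connected) (hdeg : ∀ v, 1 ≤ G.degree v)
    (hm : G.edgeFinset.card = m)
    (U : Matrix G.Dart G.Dart ℂ)
    (hU : U = Matrix.of fun e f =>
      if f.snd = e.fst then
        (if f = e.symm then 2 / (G.degree f.snd : ℂ) - 1 else 2 / (G.degree f.snd : ℂ))
      else 0)
    (T : Matrix (Fin n) (Fin n) ℂ)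
    (hT : T = Matrix.of fun u v => if G.Adj u v then 1 / (G.degree u : ℂ) else 0)
    (μ : ℝ) (hμ1 : -1 ≤ μ) (hμ2 : μ ≤ 1)
    (hev : det ((μ : ℂ) • (1 : Matrix (Fin n) (Fin n) ℂ) - T) = 0) :
    det (((μ : ℂ) + Complex.I * (Real.sqrt (1 - μ ^ 2) : ℂ)) •
        (1 : Matrix G.Dart G.Dart ℂ) - U) = 0 ∧
      det (((μ : ℂ) - Complex.I * (Real.sqrt (1 - μ ^ 2) : ℂ)) •
        (1 : Matrix G.Dart G.Dart ℂ) - U) = 0 := by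
  have hdegC : ∀ v, (G.degree v : ℂ) ≠ 0 := by
    intro v
    have h := hdeg v
    exact_mod_cast (by omega : G.degree v ≠ 0)
  obtain ⟨f, hf, hf0⟩ := (Matrix.exists_mulVec_eq_zero_iff).mpr hev
  have hTf : ∀ u, ∑ w ∈ G.neighborFinset u, f w = (G.degree u : ℂ) * μ * f u := by
    intro u
    have h1 := congrFun hf0 u
    simp only [Matrix.sub_mulVec, Matrix.smul_mulVec, Matrix.one_mulVec,
      Pi.sub_apply, Pi.smul_apply, smul_eq_mul, Pi.zero_apply, sub_eq_zero] at h1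
    subst hT
    simp only [Matrix.mulVec, dotProduct, Matrix.of_apply, ite_mul, zero_mul] at h1
    rw [← Finset.sum_filter, ← SimpleGraph.neighborFinset_eq_filter,
      ← Finset.mul_sum] at h1
    have hd := hdegC u
    field_simp at h1 ⊢
    linear_combination -h1
  have hsnn : (0 : ℝ) ≤ 1 - μ ^ 2 := by nlinarith
  have hsq : ((Real.sqrt (1 - μ ^ 2) : ℝ) : ℂ) ^ 2 = 1 - (μ : ℂ) ^ 2 := by
    rw [← Complex.ofReal_pow, Real.sq_sqrt hsnn]
    push_cast
    ring
  set s : ℝ := Real.sqrt (1 - μ ^ 2) with hsdef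
  constructor
  · apply grover_aux G hdeg U hU (μ : ℂ) f hf hTf
    · exact quad_root μ s hsq _ (Or.inl rfl)
    · intro hl2
      have hμl : (μ : ℂ) * ((μ : ℂ) + Complex.I * s) = 1 := by
        linear_combination (-(1:ℂ)/2) * quad_root μ s hsq _ (Or.inl rfl) + (1/2 : ℂ) * hl2
      exact quad_real μ s _ (Or.inl rfl) hμl
  · apply grover_aux G hdeg U hU (μ : ℂ) f hf hTf
    · exact quad_root μ s hsq _ (Or.inr rfl)
    · intro hl2
      have hμl : (μ : ℂ) * ((μ : ℂ) - Complex.I * s) = 1 := by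
        linear_combination (-(1:ℂ)/2) * quad_root μ s hsq _ (Or.inr rfl) + (1/2 : ℂ) * hl2
      exact quad_real μ s _ (Or.inr rfl) hμl
end
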